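/- arXiv:2012.01965 — 5 statements merged into one kernel-verified Lean document; each statement's English description precedes it below -/
import Mathlib

section
/- Let T > 0, let σ : ℝ → ℝ be twice differentiable and S₁, S₂ : ℝ → ℝ be differentiable. Let P₁, P₂ : ℝ × (0,T) → ℝ be functions that are twice continuously differentiable in the space variable x and continuously differentiable in the time variable t, with P₁(x,t) > 0 for all x ∈ ℝ and t ∈ (0,T). Suppose that for i = 1,2 and all x ∈ ℝ, t ∈ (0,T), the Fokker–Planck equation ∂ₜPᵢ(x,t) = −∂ₓ(Sᵢ(x)·Pᵢ(x,t)) + (1/2)·∂ₓₓ(σ(x)·Pᵢ(x,t)) holds. Then the quotient V(x,t) = P₂(x,t)/P₁(x,t) satisfies, for all x ∈ ℝ and t ∈ (0,T), the partial differential equation ∂ₜV = { (S₁′(x) − S₂′(x)) + (S₁(x) − S₂(x))·(∂ₓP₁/P₁) }·V + { σ(x)·(∂ₓP₁/P₁) + σ′(x) − S₂(x) }·∂ₓV + (1/2)·σ(x)·∂ₓₓV. -/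
/-!
Write `P₂ = V P₁`. By the Leibniz rule, `∂ₓP₂ = P₁ ∂ₓV + V ∂ₓP₁` and
`∂ₓₓP₂ = P₁ ∂ₓₓV + 2 ∂ₓP₁ ∂ₓV + V ∂ₓₓP₁`, while `∂ₜV = (∂ₜP₂ - V ∂ₜP₁) / P₁`.
Substituting the two Fokker–Planck equations, every term of `V · (FP for P₁)` cancels
against the matching term of `FP for P₂` except those carrying `S₁ - S₂`, its derivative
or a derivative of `V`, and dividing by `P₁` leaves the stated equation.
-/

section QuotientRule

variable {𝕜 𝕜' : Type*} [NontriviallyNormedField 𝕜] [NontriviallyNormedField 𝕜']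
  [NormedAlgebra 𝕜 𝕜'] {f g f' g' : 𝕜 → 𝕜'}

theorem HasDerivAt.div_eq_sub_div_mul {a b : 𝕜'} {x : 𝕜}
    (hf : HasDerivAt f a x) (hg : HasDerivAt g b x) (hx : g x ≠ 0) :
    HasDerivAt (fun y => f y / g y) ((a - f x / g x * b) / g x) x :=
  (hf.div hg hx).congr_deriv (by field_simp)

theorem deriv_div_eq_sub_div_mul (hf : ∀ y, HasDerivAt f (f' y) y)
    (hg : ∀ y, HasDerivAt g (g' y) y) (hg₀ : ∀ y, g y ≠ 0) :
    deriv (fun y => f y / g y) = fun y => (f' y - f y / g y * g' y) / g y :=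
  funext fun y => ((hf y).div_eq_sub_div_mul (hg y) (hg₀ y)).deriv

theorem deriv_deriv_div_eq (hf : ∀ y, HasDerivAt f (f' y) y)
    (hg : ∀ y, HasDerivAt g (g' y) y) (hg₀ : ∀ y, g y ≠ 0) {x : 𝕜} {f'' g'' : 𝕜'}
    (hf' : HasDerivAt f' f'' x) (hg' : HasDerivAt g' g'' x) :
    deriv (deriv (fun y => f y / g y)) x =
      (f'' - 2 * deriv (fun y => f y / g y) x * g' x - f x / g x * g'') / g x := by
  have hV := (hf x).div_eq_sub_div_mul (hg x) (hg₀ x)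
  have hnum : HasDerivAt (fun y => f' y - f y / g y * g' y)
      (f'' - ((f' x - f x / g x * g' x) / g x * g' x + f x / g x * g'')) x :=
    hf'.sub (hV.mul hg')
  rw [deriv_div_eq_sub_div_mul hf hg hg₀, (hnum.div_eq_sub_div_mul (hg x) (hg₀ x)).deriv]
  ring

end QuotientRule

theorem fokkerPlanck_sub_mul_div_eq {K : Type*} [Field K] [CharZero K]
    {S₁ S₂ S₁' S₂' σ σ' σ'' p₁ p₁x p₁xx p₂ p₂x p₂xx vx vxx : K} (hp₁ : p₁ ≠ 0)
    (hvx : vx = (p₂x - p₂ / p₁ * p₁x) / p₁)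
    (hvxx : vxx = (p₂xx - 2 * vx * p₁x - p₂ / p₁ * p₁xx) / p₁) :
    ((-(S₂' * p₂ + S₂ * p₂x) + 1 / 2 * (σ'' * p₂ + 2 * σ' * p₂x + σ * p₂xx))
        - p₂ / p₁ * (-(S₁' * p₁ + S₁ * p₁x) + 1 / 2 * (σ'' * p₁ + 2 * σ' * p₁x + σ * p₁xx)))
        / p₁ =
      ((S₁' - S₂') + (S₁ - S₂) * (p₁x / p₁)) * (p₂ / p₁)
        + (σ * (p₁x / p₁) + σ' - S₂) * vx + 1 / 2 * σ * vxx := by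
  subst hvxx hvx
  field_simp
  ring

theorem quotient_of_densities_pde_general
    (T : ℝ)
    (σ S₁ S₂ σ' σ'' S₁' S₂' : ℝ → ℝ)
    (P₁ P₂ P₁x P₁xx P₂x P₂xx P₁t P₂t : ℝ → ℝ → ℝ)
    -- spatial derivatives
    (hP₁x : ∀ x : ℝ, ∀ t ∈ Set.Ioo (0 : ℝ) T, HasDerivAt (fun y => P₁ y t) (P₁x x t) x)
    (hP₁xx : ∀ x : ℝ, ∀ t ∈ Set.Ioo (0 : ℝ) T, HasDerivAt (fun y => P₁x y t) (P₁xx x t) x)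
    (hP₂x : ∀ x : ℝ, ∀ t ∈ Set.Ioo (0 : ℝ) T, HasDerivAt (fun y => P₂ y t) (P₂x x t) x)
    (hP₂xx : ∀ x : ℝ, ∀ t ∈ Set.Ioo (0 : ℝ) T, HasDerivAt (fun y => P₂x y t) (P₂xx x t) x)
    -- time derivatives, continuous in t
    (hP₁t : ∀ x : ℝ, ∀ t ∈ Set.Ioo (0 : ℝ) T, HasDerivAt (fun s => P₁ x s) (P₁t x t) t)
    (hP₂t : ∀ x : ℝ, ∀ t ∈ Set.Ioo (0 : ℝ) T, HasDerivAt (fun s => P₂ x s) (P₂t x t) t)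
    -- positivity of the reference density
    (hP₁pos : ∀ x : ℝ, ∀ t ∈ Set.Ioo (0 : ℝ) T, 0 < P₁ x t)
    -- Fokker–Planck equations: ∂ₜPᵢ = −∂ₓ(Sᵢ Pᵢ) + (1/2) ∂ₓₓ(σ Pᵢ)
    (hFP₁ : ∀ x : ℝ, ∀ t ∈ Set.Ioo (0 : ℝ) T,
      P₁t x t = -(S₁' x * P₁ x t + S₁ x * P₁x x t)
        + (1 / 2) * (σ'' x * P₁ x t + 2 * σ' x * P₁x x t + σ x * P₁xx x t))
    (hFP₂ : ∀ x : ℝ, ∀ t ∈ Set.Ioo (0 : ℝ) T,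
      P₂t x t = -(S₂' x * P₂ x t + S₂ x * P₂x x t)
        + (1 / 2) * (σ'' x * P₂ x t + 2 * σ' x * P₂x x t + σ x * P₂xx x t)) :
    ∀ x : ℝ, ∀ t ∈ Set.Ioo (0 : ℝ) T,
      HasDerivAt (fun s => P₂ x s / P₁ x s)
        ( ((S₁' x - S₂' x) + (S₁ x - S₂ x) * (P₁x x t / P₁ x t)) * (P₂ x t / P₁ x t)
          + (σ x * (P₁x x t / P₁ x t) + σ' x - S₂ x)
              * deriv (fun y => P₂ y t / P₁ y t) x
          + (1 / 2) * σ x * deriv (deriv (fun y => P₂ y t / P₁ y t)) x ) t := by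
  intro x t ht
  have hP₁₀ : ∀ y, P₁ y t ≠ 0 := fun y => (hP₁pos y t ht).ne'
  have hVx := deriv_div_eq_sub_div_mul (fun y => hP₂x y t ht) (fun y => hP₁x y t ht) hP₁₀
  have hVxx := deriv_deriv_div_eq (fun y => hP₂x y t ht) (fun y => hP₁x y t ht) hP₁₀
    (hP₂xx x t ht) (hP₁xx x t ht)
  refine ((hP₂t x t ht).div_eq_sub_div_mul (hP₁t x t ht) (hP₁₀ x)).congr_deriv ?_
  rw [hFP₁ x t ht, hFP₂ x t ht]
  exact fokkerPlanck_sub_mul_div_eq (hP₁₀ x) (congrFun hVx x) hVxx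

/-- One-dimensional case of Theorem 3.1: if `P₁, P₂` solve the Fokker–Planck
equations associated with drifts `S₁, S₂` and common squared diffusion
coefficient `σ`, and `P₁ > 0`, then the quotient `V = P₂ / P₁` satisfies the
stated PDE. Partial derivatives in space are expressed with `deriv`, the
partial derivative in time with `HasDerivAt`. -/
theorem quotient_of_densities_pde
    (T : ℝ) (hT : 0 < T)
    (σ S₁ S₂ σ' σ'' S₁' S₂' : ℝ → ℝ)
    (hσ : ∀ x, HasDerivAt σ (σ' x) x)
    (hσ' : ∀ x, HasDerivAt σ' (σ'' x) x)
    (hS₁ : ∀ x, HasDerivAt S₁ (S₁' x) x)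
    (hS₂ : ∀ x, HasDerivAt S₂ (S₂' x) x)
    (P₁ P₂ P₁x P₁xx P₂x P₂xx P₁t P₂t : ℝ → ℝ → ℝ)
    -- spatial derivatives
    (hP₁x : ∀ x : ℝ, ∀ t ∈ Set.Ioo (0 : ℝ) T, HasDerivAt (fun y => P₁ y t) (P₁x x t) x)
    (hP₁xx : ∀ x : ℝ, ∀ t ∈ Set.Ioo (0 : ℝ) T, HasDerivAt (fun y => P₁x y t) (P₁xx x t) x)
    (hP₂x : ∀ x : ℝ, ∀ t ∈ Set.Ioo (0 : ℝ) T, HasDerivAt (fun y => P₂ y t) (P₂x x t) x)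
    (hP₂xx : ∀ x : ℝ, ∀ t ∈ Set.Ioo (0 : ℝ) T, HasDerivAt (fun y => P₂x y t) (P₂xx x t) x)
    -- continuity of second spatial derivatives (twice *continuously* differentiable in x)
    (hP₁xxc : ∀ t ∈ Set.Ioo (0 : ℝ) T, Continuous (fun y => P₁xx y t))
    (hP₂xxc : ∀ t ∈ Set.Ioo (0 : ℝ) T, Continuous (fun y => P₂xx y t))
    -- time derivatives, continuous in t
    (hP₁t : ∀ x : ℝ, ∀ t ∈ Set.Ioo (0 : ℝ) T, HasDerivAt (fun s => P₁ x s) (P₁t x t) t)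
    (hP₂t : ∀ x : ℝ, ∀ t ∈ Set.Ioo (0 : ℝ) T, HasDerivAt (fun s => P₂ x s) (P₂t x t) t)
    (hP₁tc : ∀ x : ℝ, ContinuousOn (fun s => P₁t x s) (Set.Ioo (0 : ℝ) T))
    (hP₂tc : ∀ x : ℝ, ContinuousOn (fun s => P₂t x s) (Set.Ioo (0 : ℝ) T))
    -- positivity of the reference density
    (hP₁pos : ∀ x : ℝ, ∀ t ∈ Set.Ioo (0 : ℝ) T, 0 < P₁ x t)
    -- Fokker–Planck equations: ∂ₜPᵢ = −∂ₓ(Sᵢ Pᵢ) + (1/2) ∂ₓₓ(σ Pᵢ)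
    (hFP₁ : ∀ x : ℝ, ∀ t ∈ Set.Ioo (0 : ℝ) T,
      P₁t x t = -(S₁' x * P₁ x t + S₁ x * P₁x x t)
        + (1 / 2) * (σ'' x * P₁ x t + 2 * σ' x * P₁x x t + σ x * P₁xx x t))
    (hFP₂ : ∀ x : ℝ, ∀ t ∈ Set.Ioo (0 : ℝ) T,
      P₂t x t = -(S₂' x * P₂ x t + S₂ x * P₂x x t)
        + (1 / 2) * (σ'' x * P₂ x t + 2 * σ' x * P₂x x t + σ x * P₂xx x t)) :
    ∀ x : ℝ, ∀ t ∈ Set.Ioo (0 : ℝ) T,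
      HasDerivAt (fun s => P₂ x s / P₁ x s)
        ( ((S₁' x - S₂' x) + (S₁ x - S₂ x) * (P₁x x t / P₁ x t)) * (P₂ x t / P₁ x t)
          + (σ x * (P₁x x t / P₁ x t) + σ' x - S₂ x)
              * deriv (fun y => P₂ y t / P₁ y t) x
          + (1 / 2) * σ x * deriv (deriv (fun y => P₂ y t / P₁ y t)) x ) t :=
  quotient_of_densities_pde_general T σ S₁ S₂ σ' σ'' S₁' S₂' P₁ P₂ P₁x P₁xx P₂x P₂xx P₁t P₂t hP₁x
    hP₁xx hP₂x hP₂xx hP₁t hP₂t hP₁pos hFP₁ hFP₂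
end

section
/- Let n ≥ 1, let S and T be open subsets of ℝⁿ, and let g : S → T be a bijection such that g is continuously differentiable on S and its inverse h : T → S is continuously differentiable on T. Let f : ℝⁿ → [0,∞) be a measurable function vanishing outside S, and let μ be the measure on ℝⁿ with density f with respect to Lebesgue measure (so μ is concentrated on S). Then the pushforward of μ under g has density with respect to Lebesgue measure given by y ↦ f(h(y))·|det Dh(y)| for y ∈ T and 0 for y ∉ T, where Dh(y) denotes the (Fréchet) derivative of h at y. -/
/-!
Since the density vanishes off `S`, the pushforward measure of `A` is the mass of
`g ⁻¹' A ∩ S = h '' (A ∩ T)`. As `h` is injective and differentiable on `T`, the change of variables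
formula turns the integral of `f` over this image into the integral of `|det Dh| · (f ∘ h)` over
`A ∩ T`.
-/

open MeasureTheory Measure Set
open scoped ENNReal

theorem ae_withDensity_mem_of_eq_zero_off {α : Type*} [MeasurableSpace α] (μ : Measure α)
    {s : Set α} (hs : MeasurableSet s) {ρ : α → ℝ≥0∞} (hρ : ∀ x ∉ s, ρ x = 0) :
    ∀ᵐ x ∂μ.withDensity ρ, x ∈ s := by
  rw [ae_iff, ← compl_def, withDensity_apply _ hs.compl]
  exact setLIntegral_eq_zero hs.compl hρ

theorem map_withDensity_eq_withDensity_indicator_abs_det_mul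
    {E : Type*} [NormedAddCommGroup E] [NormedSpace ℝ E] [FiniteDimensional ℝ E]
    [MeasurableSpace E] [BorelSpace E] (μ : Measure E) [μ.IsAddHaarMeasure]
    {s t : Set E} (hs : MeasurableSet s) (ht : MeasurableSet t) {g h : E → E}
    (hh : BijOn h t s) (hgh : LeftInvOn g h t) (hg : ContinuousOn g s)
    {h' : E → E →L[ℝ] E} (hh' : ∀ y ∈ t, HasFDerivWithinAt h (h' y) t y)
    {ρ : E → ℝ≥0∞} (hρ : ∀ x ∉ s, ρ x = 0) :
    (μ.withDensity ρ).map g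
      = μ.withDensity (t.indicator fun y => ENNReal.ofReal |(h' y).det| * ρ (h y)) := by
  have hae := ae_withDensity_mem_of_eq_zero_off μ hs hρ
  have hgm : AEMeasurable g (μ.withDensity ρ) := by
    rw [← restrict_eq_self_of_ae_mem hae]
    exact hg.aemeasurable hs
  ext A hA
  have hpre : g ⁻¹' A ∩ s = h '' (A ∩ t) := by
    rw [hgh.image_inter', hh.image_eq]
  calc (μ.withDensity ρ).map g A
      = μ.withDensity ρ (g ⁻¹' A ∩ s) := by
        rw [map_apply_of_aemeasurable hgm hA, measure_inter_conull (t := s) hae]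
    _ = ∫⁻ x in h '' (A ∩ t), ρ x ∂μ := by rw [hpre, withDensity_apply']
    _ = ∫⁻ y in A ∩ t, ENNReal.ofReal |(h' y).det| * ρ (h y) ∂μ :=
        lintegral_image_eq_lintegral_abs_det_fderiv_mul μ (hA.inter ht)
          (fun y hy => (hh' y hy.2).mono inter_subset_right) (hh.injOn.mono inter_subset_right) ρ
    _ = _ := by rw [withDensity_apply _ hA, lintegral_indicator ht, restrict_restrict ht, inter_comm]

open MeasureTheory Classical in
theorem transformation_theorem_general
    {n : ℕ}
    (S T : Set (Fin n → ℝ)) (hS : IsOpen S) (hT : IsOpen T)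
    (g h : (Fin n → ℝ) → (Fin n → ℝ))
    (hbij : Set.BijOn g S T)
    (hinv : Set.InvOn h g S T)
    (hg : ContDiffOn ℝ 1 g S)
    (h' : (Fin n → ℝ) → ((Fin n → ℝ) →L[ℝ] (Fin n → ℝ)))
    (hh' : ∀ y ∈ T, HasFDerivAt h (h' y) y)
    (f : (Fin n → ℝ) → ℝ)
    (hfS : ∀ x ∉ S, f x = 0) :
    (volume.withDensity (fun x => ENNReal.ofReal (f x))).map g
      = volume.withDensity
          (fun y => if y ∈ T then ENNReal.ofReal (f (h y) * |(h' y).det|) else 0) := by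
  rw [map_withDensity_eq_withDensity_indicator_abs_det_mul volume hS.measurableSet
    hT.measurableSet (hbij.symm hinv.symm) hinv.2 hg.continuousOn
    (fun y hy => (hh' y hy).hasFDerivWithinAt) (fun x hx => by simp [hfS x hx])]
  congr 1
  ext y
  by_cases hy : y ∈ T <;> simp [hy, ENNReal.ofReal_mul' (abs_nonneg _), mul_comm]

open MeasureTheory Classical in
/-- Transformation theorem (Theorem 4.1 of the paper, after Gut): if `μ` is the
measure on `ℝⁿ` with density `f` (vanishing outside the open set `S`), and
`g : S → T` is a bijection which is `C¹` on `S` with `C¹` inverse `h` on the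
open set `T`, then the pushforward of `μ` under `g` has density
`y ↦ f(h(y))·|det Dh(y)|` on `T` and `0` off `T`. -/
theorem transformation_theorem
    {n : ℕ} (hn : 1 ≤ n)
    (S T : Set (Fin n → ℝ)) (hS : IsOpen S) (hT : IsOpen T)
    (g h : (Fin n → ℝ) → (Fin n → ℝ))
    (hbij : Set.BijOn g S T)
    (hinv : Set.InvOn h g S T)
    (hg : ContDiffOn ℝ 1 g S) (hh : ContDiffOn ℝ 1 h T)
    (h' : (Fin n → ℝ) → ((Fin n → ℝ) →L[ℝ] (Fin n → ℝ)))
    (hh' : ∀ y ∈ T, HasFDerivAt h (h' y) y)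
    (f : (Fin n → ℝ) → ℝ)
    (hfmeas : Measurable f) (hf0 : ∀ x, 0 ≤ f x)
    (hfS : ∀ x ∉ S, f x = 0) :
    (volume.withDensity (fun x => ENNReal.ofReal (f x))).map g
      = volume.withDensity
          (fun y => if y ∈ T then ENNReal.ofReal (f (h y) * |(h' y).det|) else 0) :=
  transformation_theorem_general S T hS hT g h hbij hinv hg h' hh' f hfS
end

section
/- Let ρ ∈ (−1,1), v > 0 and μ₁, μ₂ ∈ ℝ. Let φ : ℝ² → ℝ be the bivariate Gaussian density φ(x₁,x₂) = (1/(2πv√(1−ρ²))) · exp( −[ (x₁−μ₁)² + (x₂−μ₂)² − 2ρ(x₁−μ₁)(x₂−μ₂) ] / (2v(1−ρ²)) ), and let ν be the measure on ℝ² with density φ with respect to Lebesgue measure. Let g(x) = 1/(1+e^{−x}) be the sigmoid map. Then the pushforward of ν under the map (x₁,x₂) ↦ (g(x₁), g(x₂)) has density with respect to Lebesgue measure on ℝ² given by (y₁,y₂) ↦ (1/(2πv√(1−ρ²))) · (1/( y₁(1−y₁)·y₂(1−y₂) )) · exp( −[ (β(y₁)−μ₁)² + (β(y₂)−μ₂)²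 − 2ρ(β(y₁)−μ₁)(β(y₂)−μ₂) ] / (2v(1−ρ²)) ) for (y₁,y₂) ∈ (0,1)², and 0 otherwise, where β(y) = log(y/(1−y)). -/
open MeasureTheory Real Set
open scoped ENNReal

/-! The sigmoid `σ` is a smooth bijection of `ℝ` onto `(0, 1)` with `σ' = σ (1 - σ)` and inverse
the logit `y ↦ log (y / (1 - y))`. By the one-dimensional change of variables, `σ` pushes the
measure with density `σ'` forward to Lebesgue measure on `(0, 1)`, and hence `σ × σ` pushes the
measure with density `σ'(x₁) σ'(x₂)` forward to Lebesgue measure on `(0, 1)²`. Writing an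
arbitrary density `f` on `ℝ²` as `σ'(x₁) σ'(x₂)` times `k (σ x₁, σ x₂)`, with
`k y = f (logit y₁, logit y₂) / (y₁ (1 - y₁) y₂ (1 - y₂))`, the pushforward of `f` is `k` on
`(0, 1)²`. -/

theorem map_withDensity_abs_deriv_eq_restrict_range {f f' : ℝ → ℝ}
    (hf' : ∀ x, HasDerivAt f (f' x) x) (hf : Function.Injective f) :
    (volume.withDensity fun x => ENNReal.ofReal |f' x|).map f = volume.restrict (range f) := by
  simpa [← image_univ] using map_withDensity_abs_det_fderiv_eq_addHaar volume
    MeasurableSet.univ.nullMeasurableSet (fun x _ => (hf' x).hasFDerivAt.hasFDerivWithinAt)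
    hf.injOn

theorem map_withDensity_comp {α β : Type*} [MeasurableSpace α] [MeasurableSpace β]
    (μ : Measure α) {F : α → β} (hF : Measurable F) {k : β → ℝ≥0∞} (hk : Measurable k) :
    (μ.withDensity (k ∘ F)).map F = (μ.map F).withDensity k := by
  ext s hs
  rw [Measure.map_apply hF hs, withDensity_apply _ (hF hs), withDensity_apply _ hs,
    setLIntegral_map hs hk hF]
  rfl

namespace Real

noncomputable def logit (y : ℝ) : ℝ := log (y / (1 - y))

lemma logit_sigmoid (x : ℝ) : logit (sigmoid x) = x := by
  rw [logit, ← sigmoid_neg, ← sigmoid_mul_rexp_neg, div_mul_cancel_left₀ (sigmoid_pos x).ne',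
    ← exp_neg, neg_neg, log_exp]

lemma sigmoid_mul_one_sub_sigmoid_pos (x : ℝ) : 0 < sigmoid x * (1 - sigmoid x) :=
  mul_pos (sigmoid_pos x) (sub_pos.2 (sigmoid_lt_one x))

lemma map_sigmoid_withDensity_deriv :
    (volume.withDensity fun x => ENNReal.ofReal (sigmoid x * (1 - sigmoid x))).map sigmoid
      = volume.restrict (Ioo 0 1) := by
  simpa [abs_of_pos (sigmoid_mul_one_sub_sigmoid_pos _), range_sigmoid] using
    map_withDensity_abs_deriv_eq_restrict_range hasDerivAt_sigmoid sigmoid_injective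

lemma map_prodMap_sigmoid_withDensity_jacobian :
    ((volume : Measure (ℝ × ℝ)).withDensity fun p =>
        ENNReal.ofReal (sigmoid p.1 * (1 - sigmoid p.1))
          * ENNReal.ofReal (sigmoid p.2 * (1 - sigmoid p.2))).map (Prod.map sigmoid sigmoid)
      = volume.restrict (Ioo 0 1 ×ˢ Ioo 0 1) := by
  rw [Measure.volume_eq_prod,
    ← prod_withDensity (f := fun x => ENNReal.ofReal (sigmoid x * (1 - sigmoid x)))
      (g := fun x => ENNReal.ofReal (sigmoid x * (1 - sigmoid x))) (by fun_prop) (by fun_prop),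
    ← Measure.map_prod_map _ _ continuous_sigmoid.measurable continuous_sigmoid.measurable,
    map_sigmoid_withDensity_deriv, Measure.prod_restrict]

theorem map_prodMap_sigmoid_withDensity {f : ℝ × ℝ → ℝ≥0∞} (hf : Measurable f) :
    ((volume : Measure (ℝ × ℝ)).withDensity f).map (Prod.map sigmoid sigmoid)
      = volume.withDensity ((Ioo 0 1 ×ˢ Ioo 0 1).indicator fun q =>
          ENNReal.ofReal (1 / (q.1 * (1 - q.1) * (q.2 * (1 - q.2))))
            * f (logit q.1, logit q.2)) := by
  set k : ℝ × ℝ → ℝ≥0∞ := fun q =>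
    ENNReal.ofReal (1 / (q.1 * (1 - q.1) * (q.2 * (1 - q.2)))) * f (logit q.1, logit q.2)
  have hk : Measurable k := by unfold k logit; fun_prop
  have hG : Measurable (Prod.map sigmoid sigmoid) := by fun_prop
  have hf_eq : f = (fun p => ENNReal.ofReal (sigmoid p.1 * (1 - sigmoid p.1))
      * ENNReal.ofReal (sigmoid p.2 * (1 - sigmoid p.2))) * (k ∘ Prod.map sigmoid sigmoid) := by
    ext p
    have h₁ := sigmoid_mul_one_sub_sigmoid_pos p.1
    have h₂ := sigmoid_mul_one_sub_sigmoid_pos p.2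
    simp only [Pi.mul_apply, Function.comp_apply, Prod.map_fst, Prod.map_snd, k, logit_sigmoid]
    rw [← mul_assoc, ← ENNReal.ofReal_mul h₁.le, ← ENNReal.ofReal_mul (by positivity),
      mul_one_div_cancel (by positivity), ENNReal.ofReal_one, one_mul]
  rw [hf_eq, withDensity_mul _ (by fun_prop) (hk.comp hG), map_withDensity_comp _ hG hk,
    map_prodMap_sigmoid_withDensity_jacobian,
    withDensity_indicator (measurableSet_Ioo.prod measurableSet_Ioo)]

end Real

open MeasureTheory Real Classical in
theorem sigmoid_pushforward_bivariate_gaussian_general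
    (ρ v μ₁ μ₂ : ℝ) :
    ((volume : Measure (ℝ × ℝ)).withDensity
        (fun p => ENNReal.ofReal
          ((1 / (2 * π * v * Real.sqrt (1 - ρ ^ 2)))
            * Real.exp (-((p.1 - μ₁) ^ 2 + (p.2 - μ₂) ^ 2
                - 2 * ρ * (p.1 - μ₁) * (p.2 - μ₂)) / (2 * v * (1 - ρ ^ 2)))))).map
      (fun p => (1 / (1 + Real.exp (-p.1)), 1 / (1 + Real.exp (-p.2))))
      = (volume : Measure (ℝ × ℝ)).withDensity
          (fun q => if q.1 ∈ Set.Ioo (0 : ℝ) 1 ∧ q.2 ∈ Set.Ioo (0 : ℝ) 1 then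
              ENNReal.ofReal
                ((1 / (2 * π * v * Real.sqrt (1 - ρ ^ 2)))
                  * (1 / (q.1 * (1 - q.1) * (q.2 * (1 - q.2))))
                  * Real.exp (-((Real.log (q.1 / (1 - q.1)) - μ₁) ^ 2
                      + (Real.log (q.2 / (1 - q.2)) - μ₂) ^ 2
                      - 2 * ρ * (Real.log (q.1 / (1 - q.1)) - μ₁)
                          * (Real.log (q.2 / (1 - q.2)) - μ₂))
                      / (2 * v * (1 - ρ ^ 2))))
            else 0) := by
  have h_sigmoid : (fun p : ℝ × ℝ => (1 / (1 + exp (-p.1)), 1 / (1 + exp (-p.2))))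
      = Prod.map sigmoid sigmoid := by
    ext p <;> simp [sigmoid_def]
  rw [h_sigmoid, map_prodMap_sigmoid_withDensity (by fun_prop)]
  congr 1
  ext q
  split_ifs with hq
  · rw [indicator_of_mem (mem_prod.2 hq)]
    obtain ⟨⟨h₁, h₁'⟩, h₂, h₂'⟩ := hq
    have hJ : 0 ≤ 1 / (q.1 * (1 - q.1) * (q.2 * (1 - q.2))) :=
      one_div_nonneg.2 (mul_pos (mul_pos h₁ (sub_pos.2 h₁')) (mul_pos h₂ (sub_pos.2 h₂'))).le
    rw [← ENNReal.ofReal_mul hJ, logit, logit]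
    congr 1
    ring
  · exact indicator_of_notMem (fun h => hq (mem_prod.1 h)) _

open MeasureTheory Real Classical in
/-- The coordinatewise sigmoid transform of a bivariate Gaussian with common
variance `v` and correlation `ρ` has the stated density on `(0,1)²`, where
`β(y) = log(y/(1−y))` is the logit function. -/
theorem sigmoid_pushforward_bivariate_gaussian
    (ρ v μ₁ μ₂ : ℝ) (hρ₁ : -1 < ρ) (hρ₂ : ρ < 1) (hv : 0 < v) :
    ((volume : Measure (ℝ × ℝ)).withDensity
        (fun p => ENNReal.ofReal
          ((1 / (2 * π * v * Real.sqrt (1 - ρ ^ 2)))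
            * Real.exp (-((p.1 - μ₁) ^ 2 + (p.2 - μ₂) ^ 2
                - 2 * ρ * (p.1 - μ₁) * (p.2 - μ₂)) / (2 * v * (1 - ρ ^ 2)))))).map
      (fun p => (1 / (1 + Real.exp (-p.1)), 1 / (1 + Real.exp (-p.2))))
      = (volume : Measure (ℝ × ℝ)).withDensity
          (fun q => if q.1 ∈ Set.Ioo (0 : ℝ) 1 ∧ q.2 ∈ Set.Ioo (0 : ℝ) 1 then
              ENNReal.ofReal
                ((1 / (2 * π * v * Real.sqrt (1 - ρ ^ 2)))
                  * (1 / (q.1 * (1 - q.1) * (q.2 * (1 - q.2))))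
                  * Real.exp (-((Real.log (q.1 / (1 - q.1)) - μ₁) ^ 2
                      + (Real.log (q.2 / (1 - q.2)) - μ₂) ^ 2
                      - 2 * ρ * (Real.log (q.1 / (1 - q.1)) - μ₁)
                          * (Real.log (q.2 / (1 - q.2)) - μ₂))
                      / (2 * v * (1 - ρ ^ 2))))
            else 0) :=
  sigmoid_pushforward_bivariate_gaussian_general ρ v μ₁ μ₂
end

section
/- Let f : (0,1) → ℝ be defined by f(x) = 1/(1 + e^{−arcsin(2x−1)}). Then for every x ∈ (0,1), f is differentiable at x and √(x(1−x)) · f′(x) = f(x)·(1 − f(x)). -/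
/-! `f` is the logistic sigmoid `σ` composed with `θ(x) = arcsin(2x − 1)`. Since `σ' = σ(1 − σ)`
and `θ'(x) = 2/√(1 − (2x − 1)²) = 1/√(x(1 − x))`, the chain rule gives
`√(x(1 − x)) f′(x) = σ(θ x)(1 − σ(θ x))`. -/

open Real Set

lemma sqrt_one_sub_two_mul_sub_one_sq (x : ℝ) :
    √(1 - (2 * x - 1) ^ 2) = 2 * √(x * (1 - x)) := by
  rw [show 1 - (2 * x - 1) ^ 2 = 2 ^ 2 * (x * (1 - x)) by ring,
    sqrt_mul (by positivity), sqrt_sq zero_le_two]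

lemma hasDerivAt_arcsin_two_mul_sub_one {x : ℝ} (hx : x ∈ Ioo 0 1) :
    HasDerivAt (fun y => arcsin (2 * y - 1)) (√(x * (1 - x)))⁻¹ x := by
  have hlin : HasDerivAt (fun y : ℝ => 2 * y - 1) 2 x := by
    simpa using ((hasDerivAt_id x).const_mul 2).sub_const 1
  have harcsin :=
    (hasDerivAt_arcsin (x := 2 * x - 1) (by linarith [hx.1]) (by linarith [hx.2])).comp x hlin
  refine harcsin.congr_deriv ?_
  rw [sqrt_one_sub_two_mul_sub_one_sq]
  field_simp

/-- For `f(x) = 1/(1+e^{−arcsin(2x−1)})` and `x ∈ (0,1)`, `f` is differentiable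
at `x` and `√(x(1−x))·f′(x) = f(x)(1−f(x))` — the diffusion-coefficient matching
used to transform the Wright–Fisher diffusion. -/
theorem wright_fisher_transform_derivative
    (f : ℝ → ℝ) (hf : ∀ x, f x = 1 / (1 + Real.exp (-(Real.arcsin (2 * x - 1))))) :
    ∀ x ∈ Set.Ioo (0 : ℝ) 1,
      ∃ d : ℝ, HasDerivAt f d x ∧ Real.sqrt (x * (1 - x)) * d = f x * (1 - f x) := by
  intro x hx
  obtain rfl : f = sigmoid ∘ fun y => arcsin (2 * y - 1) :=
    funext fun y => by rw [hf y, one_div, Function.comp_apply, sigmoid_def]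
  have hsqrt_pos : 0 < √(x * (1 - x)) := sqrt_pos.2 (mul_pos hx.1 (sub_pos.2 hx.2))
  refine ⟨_, (hasDerivAt_sigmoid _).comp x (hasDerivAt_arcsin_two_mul_sub_one hx), ?_⟩
  rw [Function.comp_apply]
  field_simp
end

section
/- Let β > 0, σ > 0 and x₀ ∈ ℝ. For t > 0 define μ₁ = x₀, σ₁²(t) = σ²t, μ₂(t) = x₀e^{−βt}, σ₂²(t) = (σ²/(2β))·(1 − e^{−2βt}), and let P₁(x,t) and P₂(x,t) be the Gaussian probability densities in x with mean μ₁ and variance σ₁²(t), respectively mean μ₂(t) and variance σ₂²(t). Then the quotient V(x,t) = P₂(x,t)/P₁(x,t) satisfies, for all x ∈ ℝ and t > 0, the partial differential equation ∂ₜV(x,t) = (β/σ₁²(t))·( σ₁²(t) − x·(x − x₀) )·V(x,t) + ( (β − σ²/σ₁²(t))·x + σ²x₀/σ₁²(t) )·∂ₓV(x,t) + (σ²/2)·∂ₓₓV(x,t). -/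
/-! Both densities are Gaussian, so each of their derivatives is the density times a polynomial
in the score `ℓ = ∂ₓ log p = -(x - m) / v`. The Ornstein–Uhlenbeck mean and variance solve
`m' = -β m`, `v' = σ² - 2 β v` (the Wiener ones are the case `β = 0`), which turns the time
derivative into `∂ₜ log Pᵢ = β (1 + x ℓᵢ) + (σ²/2) (ℓᵢ² - 1/vᵢ)`: the Fokker–Planck equation
divided by `Pᵢ`. For `V = P₂ / P₁` this gives `∂ₜ log V = ∂ₜ log P₂ - ∂ₜ log P₁`,
`∂ₓ V = V (ℓ₂ - ℓ₁)` and `∂ₓₓ V = V ((ℓ₂ - ℓ₁)² + 1/v₁ - 1/v₂)`, and the PDE becomes a polynomial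
identity in `ℓ₁` and `ℓ₂`. -/

theorem HasDerivAt.div_of_logDeriv {𝕜 : Type*} [NontriviallyNormedField 𝕜] {f g : 𝕜 → 𝕜}
    {a b x : 𝕜} (hf : HasDerivAt f (f x * a) x) (hg : HasDerivAt g (g x * b) x) (hx : g x ≠ 0) :
    HasDerivAt (fun y => f y / g y) (f x / g x * (a - b)) x := by
  refine (hf.fun_div hg hx).congr_deriv ?_
  field_simp

section

open Real

noncomputable def gaussianDensity (m v x : ℝ) : ℝ :=
  1 / √(2 * π * v) * exp (-(x - m) ^ 2 / (2 * v))

noncomputable def gaussianScore (m v x : ℝ) : ℝ := -(x - m) / v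

noncomputable def ouVariance (β σ t : ℝ) : ℝ := σ ^ 2 / (2 * β) * (1 - exp (-2 * β * t))

theorem gaussianDensity_pos {v : ℝ} (hv : 0 < v) (m x : ℝ) : 0 < gaussianDensity m v x := by
  unfold gaussianDensity
  have := pi_pos
  positivity

theorem hasDerivAt_gaussianDensity (m v x : ℝ) :
    HasDerivAt (gaussianDensity m v) (gaussianDensity m v x * gaussianScore m v x) x := by
  unfold gaussianDensity gaussianScore
  refine ((((hasDerivAt_id' x).sub_const m).fun_pow 2).fun_neg.div_const (2 * v)).exp.const_mul
    (1 / √(2 * π * v)) |>.congr_deriv ?_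
  ring

theorem hasDerivAt_gaussianScore (m v x : ℝ) :
    HasDerivAt (gaussianScore m v) (-1 / v) x := by
  unfold gaussianScore
  simpa using ((hasDerivAt_id x).sub_const m).fun_neg.div_const v

theorem hasDerivAt_gaussianDensity_div {m₁ v₁ : ℝ} (hv₁ : 0 < v₁) (m₂ v₂ x : ℝ) :
    HasDerivAt (fun y => gaussianDensity m₂ v₂ y / gaussianDensity m₁ v₁ y)
      (gaussianDensity m₂ v₂ x / gaussianDensity m₁ v₁ x
        * (gaussianScore m₂ v₂ x - gaussianScore m₁ v₁ x)) x :=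
  (hasDerivAt_gaussianDensity m₂ v₂ x).div_of_logDeriv (hasDerivAt_gaussianDensity m₁ v₁ x)
    (gaussianDensity_pos hv₁ m₁ x).ne'

theorem deriv_deriv_gaussianDensity_div {m₁ v₁ : ℝ} (hv₁ : 0 < v₁) (m₂ v₂ x : ℝ) :
    deriv (deriv fun y => gaussianDensity m₂ v₂ y / gaussianDensity m₁ v₁ y) x
      = gaussianDensity m₂ v₂ x / gaussianDensity m₁ v₁ x
        * ((gaussianScore m₂ v₂ x - gaussianScore m₁ v₁ x) ^ 2 + (1 / v₁ - 1 / v₂)) := by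
  have hderiv : deriv (fun y => gaussianDensity m₂ v₂ y / gaussianDensity m₁ v₁ y) =
      fun y => gaussianDensity m₂ v₂ y / gaussianDensity m₁ v₁ y
        * (gaussianScore m₂ v₂ y - gaussianScore m₁ v₁ y) :=
    funext fun y => (hasDerivAt_gaussianDensity_div hv₁ m₂ v₂ y).deriv
  rw [hderiv, ((hasDerivAt_gaussianDensity_div hv₁ m₂ v₂ x).fun_mul
    ((hasDerivAt_gaussianScore m₂ v₂ x).fun_sub (hasDerivAt_gaussianScore m₁ v₁ x))).deriv]
  ring

theorem hasDerivAt_gaussianDensity_of_moments {m v : ℝ → ℝ} {m' v' t : ℝ} (x : ℝ)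
    (hm : HasDerivAt m m' t) (hv : HasDerivAt v v' t) (hvt : 0 < v t) :
    HasDerivAt (fun s => gaussianDensity (m s) (v s) x)
      (gaussianDensity (m t) (v t) x
        * (-v' / (2 * v t) + (x - m t) * m' / v t + (x - m t) ^ 2 * v' / (2 * v t ^ 2))) t := by
  have h2πv : 0 < 2 * π * v t := by have := pi_pos; positivity
  have hnorm := ((hv.const_mul (2 * π)).sqrt h2πv.ne').fun_inv (sqrt_pos.mpr h2πv).ne'
  have hexp := (((hm.const_sub x).fun_pow 2).fun_neg.fun_div (hv.const_mul 2)
    (by positivity)).exp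
  have h := hnorm.fun_mul hexp
  simp only [← one_div] at h
  unfold gaussianDensity
  refine h.congr_deriv ?_
  rw [sq_sqrt h2πv.le]
  field_simp
  ring

theorem hasDerivAt_gaussianDensity_of_ouMoments {m v : ℝ → ℝ} {β σ t : ℝ} (x : ℝ)
    (hm : HasDerivAt m (-β * m t) t) (hv : HasDerivAt v (σ ^ 2 - 2 * β * v t) t)
    (hvt : 0 < v t) :
    HasDerivAt (fun s => gaussianDensity (m s) (v s) x)
      (gaussianDensity (m t) (v t) x
        * (β * (1 + x * gaussianScore (m t) (v t) x)
          + σ ^ 2 / 2 * (gaussianScore (m t) (v t) x ^ 2 - 1 / v t))) t := by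
  refine (hasDerivAt_gaussianDensity_of_moments x hm hv hvt).congr_deriv ?_
  unfold gaussianScore
  field_simp
  ring

theorem hasDerivAt_ouMean (β x₀ t : ℝ) :
    HasDerivAt (fun s => x₀ * exp (-β * s)) (-β * (x₀ * exp (-β * t))) t := by
  refine (((hasDerivAt_id' t).const_mul (-β)).exp.const_mul x₀).congr_deriv ?_
  ring

theorem hasDerivAt_ouVariance {β : ℝ} (hβ : β ≠ 0) (σ t : ℝ) :
    HasDerivAt (ouVariance β σ) (σ ^ 2 - 2 * β * ouVariance β σ t) t := by
  unfold ouVariance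
  refine ((((hasDerivAt_id' t).const_mul (-2 * β)).exp.const_sub 1).const_mul
    (σ ^ 2 / (2 * β))).congr_deriv ?_
  field_simp
  ring

theorem ouVariance_pos {β σ t : ℝ} (hβ : 0 < β) (hσ : σ ≠ 0) (ht : 0 < t) :
    0 < ouVariance β σ t := by
  have hdecay : 0 < 1 - exp (-2 * β * t) := sub_pos.mpr (exp_lt_one_iff.mpr (by nlinarith))
  unfold ouVariance
  positivity

end

open Real in
/-- The paper's Proposition (Section 4.2): the quotient `V = P₂/P₁` of the
Ornstein–Uhlenbeck transition density `P₂` over the Wiener transition density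
`P₁` satisfies the quotient-of-densities PDE
`∂ₜV = (β/σ₁²)(σ₁² − x(x−x₀))·V + ((β − σ²/σ₁²)x + σ²x₀/σ₁²)·∂ₓV + (σ²/2)·∂ₓₓV`,
with `σ₁² = σ²t`. -/
theorem ou_quotient_pde
    (β σ x₀ : ℝ) (hβ : 0 < β) (hσ : 0 < σ)
    (P₁ P₂ : ℝ → ℝ → ℝ)
    (hP₁ : ∀ x t, P₁ x t
      = (1 / Real.sqrt (2 * π * (σ ^ 2 * t)))
          * Real.exp (-(x - x₀) ^ 2 / (2 * (σ ^ 2 * t))))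
    (hP₂ : ∀ x t, P₂ x t
      = (1 / Real.sqrt (2 * π * (σ ^ 2 / (2 * β) * (1 - Real.exp (-2 * β * t)))))
          * Real.exp (-(x - x₀ * Real.exp (-β * t)) ^ 2
              / (2 * (σ ^ 2 / (2 * β) * (1 - Real.exp (-2 * β * t)))))) :
    ∀ (x t : ℝ), 0 < t →
      HasDerivAt (fun s => P₂ x s / P₁ x s)
        ( (β / (σ ^ 2 * t)) * ((σ ^ 2 * t) - x * (x - x₀)) * (P₂ x t / P₁ x t)
          + ((β - σ ^ 2 / (σ ^ 2 * t)) * x + σ ^ 2 * x₀ / (σ ^ 2 * t))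
              * deriv (fun y => P₂ y t / P₁ y t) x
          + (σ ^ 2 / 2) * deriv (deriv (fun y => P₂ y t / P₁ y t)) x ) t := by
  intro x t ht
  obtain rfl : P₁ = fun y s => gaussianDensity x₀ (σ ^ 2 * s) y := funext₂ hP₁
  obtain rfl : P₂ = fun y s => gaussianDensity (x₀ * exp (-β * s)) (ouVariance β σ s) y :=
    funext₂ hP₂
  have hv₁ : 0 < σ ^ 2 * t := by positivity
  have hP₁t := hasDerivAt_gaussianDensity_of_ouMoments (β := 0) (σ := σ) x
    ((hasDerivAt_const t x₀).congr_deriv (by ring))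
    (((hasDerivAt_id' t).const_mul (σ ^ 2)).congr_deriv (by ring)) hv₁
  have hP₂t := hasDerivAt_gaussianDensity_of_ouMoments x (hasDerivAt_ouMean β x₀ t)
    (hasDerivAt_ouVariance hβ.ne' σ t) (ouVariance_pos hβ hσ.ne' ht)
  refine (hP₂t.div_of_logDeriv hP₁t (gaussianDensity_pos hv₁ x₀ x).ne').congr_deriv ?_
  rw [(hasDerivAt_gaussianDensity_div hv₁ _ _ x).deriv, deriv_deriv_gaussianDensity_div hv₁]
  have hcoeff₀ : β / (σ ^ 2 * t) * (σ ^ 2 * t - x * (x - x₀))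
      = β * (1 + x * gaussianScore x₀ (σ ^ 2 * t) x) := by
    unfold gaussianScore
    field_simp
    ring
  have hcoeff₁ : (β - σ ^ 2 / (σ ^ 2 * t)) * x + σ ^ 2 * x₀ / (σ ^ 2 * t)
      = β * x + σ ^ 2 * gaussianScore x₀ (σ ^ 2 * t) x := by
    unfold gaussianScore
    field_simp
    ring
  rw [hcoeff₀, hcoeff₁]
  ring
end
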